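/- Let k₁,k₂>0, J_1(z)=k₁/z¹²−k₂/z⁶ for z>0 and +∞ for z≤0, J_2(z):=J_1(2z), J_CB:=J_1+J_2, γ:=(2k₁/k₂)^{1/6}·((1+2^{-12})/(1+2^{-6}))^{1/6}, δ₁:=(2k₁/k₂)^{1/6}, z_c²:=(1/2)(13/7)^{1/6}δ₁, F(a,b):=J_2(γ+(a+b)/2)+(1/2)J_1(γ+a)+(1/2)J_1(γ+b)−J_CB(γ), and B_γ(r):=(1/2)J_1(γ+r_1)+Σ_{i=1}^∞ F(r_i,r_{i+1}). Suppose r∈ℓ²(ℕ) satisfies B_γ(r)=inf{B_γ(s) : s a real sequence with s_i→0}. Then the sequence r is nonincreasing and nonnegative, i.e. r_i ≥ r_{i+1} ≥ 0 for all i≥1, and z_c² < γ+r_i ≤ δ₁ for all i≥1. -/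

import Mathlib

open Filter Finset Set

noncomputable section

/-- The Lennard-Jones potential `J₁`, extended by `+∞` on `(-∞,0]`. -/
def LJ1 (k₁ k₂ : ℝ) (z : ℝ) : EReal :=
  if 0 < z then ((k₁ / z ^ 12 - k₂ / z ^ 6 : ℝ) : EReal) else ⊤

/-- The real-valued Lennard-Jones formula. -/
def LJ1r (k₁ k₂ : ℝ) (z : ℝ) : ℝ := k₁ / z ^ 12 - k₂ / z ^ 6

/-- The next-to-nearest neighbour potential `J₂(z) = J₁(2z)`. -/
def LJ2 (k₁ k₂ : ℝ) (z : ℝ) : EReal := LJ1 k₁ k₂ (2 * z)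

/-- The unique minimizer `γ` of `J_CB = J₁ + J₂` for `K = 2`. -/
def gammaNNN (k₁ k₂ : ℝ) : ℝ :=
  (2 * k₁ / k₂) ^ ((1 : ℝ) / 6) *
    ((1 + (2 : ℝ) ^ (-12 : ℤ)) / (1 + (2 : ℝ) ^ (-6 : ℤ))) ^ ((1 : ℝ) / 6)

/-- `J_CB(γ) = J₁(γ) + J₂(γ)` (a real number). -/
def JCBGammaNNN (k₁ k₂ : ℝ) : ℝ :=
  LJ1r k₁ k₂ (gammaNNN k₁ k₂) + LJ1r k₁ k₂ (2 * gammaNNN k₁ k₂)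

/-- `F(a,b) = J₂(γ+(a+b)/2) + ½J₁(γ+a) + ½J₁(γ+b) - J_CB(γ)`. -/
def Fcell (k₁ k₂ : ℝ) (a b : ℝ) : EReal :=
  LJ2 k₁ k₂ (gammaNNN k₁ k₂ + (a + b) / 2) +
    (((1 : ℝ) / 2 : ℝ) : EReal) * LJ1 k₁ k₂ (gammaNNN k₁ k₂ + a) +
    (((1 : ℝ) / 2 : ℝ) : EReal) * LJ1 k₁ k₂ (gammaNNN k₁ k₂ + b) -
    ((JCBGammaNNN k₁ k₂ : ℝ) : EReal)

/-- The boundary-layer functional `B_γ(r) = ½J₁(γ+r₁) + Σ_{i≥1} F(r_i,r_{i+1})`;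
here `r : ℕ → ℝ` with `r i` playing the role of `r_{i+1}`. -/
def Bgam (k₁ k₂ : ℝ) (r : ℕ → ℝ) : EReal :=
  (((1 : ℝ) / 2 : ℝ) : EReal) * LJ1 k₁ k₂ (gammaNNN k₁ k₂ + r 0) +
    ∑' i : ℕ, Fcell k₁ k₂ (r i) (r (i + 1))


/-- The unique minimizer `δ₁` of `J₁`. -/
def delta1 (k₁ k₂ : ℝ) : ℝ := (2 * k₁ / k₂) ^ ((1 : ℝ) / 6)

/-- The inflection point `z_c² = ½(13/7)^{1/6}·δ₁` of `J₂`. -/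
def zc2 (k₁ k₂ : ℝ) : ℝ := 1 / 2 * ((13 : ℝ) / 7) ^ ((1 : ℝ) / 6) * delta1 k₁ k₂


/-!
Write `ρ i = γ + r i`. Since `B_γ(0)` is finite, a minimizer has all `ρ i > 0` and summable cell
energies, so it does at least as well as every competitor that agrees with it, up to a shift,
outside a finite window: in particular the ones obtained by moving one atom or by inserting one.
Moving an atom gives the Euler–Lagrange equations
`J₁'(ρ_i) + J₁'(ρ_{i-1} + ρ_i) + J₁'(ρ_i + ρ_{i+1}) = 0` (without the middle term for `i = 0`).
As `J₁' > 0` beyond `δ₁` and `J₁' ≤ J₁'(z_*)` everywhere, they give `z_*/2 < ρ_i ≤ δ₁`, where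
`z_* = 2 z_c²` is the inflection point of `J₁`. Inserting an atom at spacing `γ` and using the
strict concavity of `J₁` beyond `z_*` gives `γ ≤ ρ_i` inductively. So the sites lie where `J₁'`
increases and the bonds `ρ_i + ρ_{i+1} ≥ 2γ > z_*` where it decreases. Now the Euler–Lagrange
equations forbid a local maximum of the bonds above `2γ` (because `J₁'(ζ) + 2 J₁'(2ζ) > 0` for
`ζ > γ`), and the bonds tend to `2γ`, so they strictly decrease; comparing the Euler–Lagrange
equations at consecutive sites then shows that `ρ` is nonincreasing.
-/

open scoped Topology ENNReal

theorem StrictConcaveOn.map_add_lt_map_add {s : Set ℝ} {f : ℝ → ℝ} (hf : StrictConcaveOn ℝ s f)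
    {a b c d : ℝ} (ha : a ∈ s) (hd : d ∈ s) (hab : a < b) (hbd : b < d) (h : b + c = a + d) :
    f a + f d < f b + f c := by
  have hda : 0 < d - a := by linarith
  set t := (b - a) / (d - a)
  have ht₀ : 0 < t := div_pos (by linarith) hda
  have ht₁ : 0 < 1 - t := by rw [one_sub_div hda.ne']; exact div_pos (by linarith) hda
  have hb := hf.2 ha hd (by linarith) ht₁ ht₀ (by ring)
  have hc := hf.2 ha hd (by linarith) ht₀ ht₁ (by ring)
  have eb : (1 - t) • a + t • d = b := by simp only [smul_eq_mul, t]; field_simp; ring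
  have ec : t • a + (1 - t) • d = c := by
    rw [show c = a + d - b by linarith]; simp only [smul_eq_mul, t]; field_simp; ring
  rw [eb, smul_eq_mul, smul_eq_mul] at hb
  rw [ec, smul_eq_mul, smul_eq_mul] at hc
  linarith

theorem EReal.coe_finset_sum {ι : Type*} (s : Finset ι) (f : ι → ℝ) :
    ((∑ i ∈ s, f i : ℝ) : EReal) = ∑ i ∈ s, (f i : EReal) :=
  map_sum (⟨⟨Real.toEReal, EReal.coe_zero⟩, EReal.coe_add⟩ : ℝ →+ EReal) f s

theorem EReal.coe_tsum {ι : Type*} {f : ι → ℝ} (hf : Summable f) :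
    ((∑' i, f i : ℝ) : EReal) = ∑' i, (f i : EReal) :=
  ((hf.hasSum.map (⟨⟨Real.toEReal, EReal.coe_zero⟩, EReal.coe_add⟩ : ℝ →+ EReal)
    continuous_coe_real_ereal).tsum_eq).symm

theorem hasSum_top_of_tendsto_sum_range {α : Type*} [AddCommMonoid α] [PartialOrder α]
    [IsOrderedAddMonoid α] [TopologicalSpace α] [OrderTopology α] [OrderTop α] {f : ℕ → α}
    {N : ℕ} (hf : ∀ j, N ≤ j → 0 ≤ f j)
    (h : Tendsto (fun n => ∑ j ∈ range n, f j) atTop (𝓝 ⊤)) : HasSum f ⊤ := by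
  refine tendsto_order.2 ⟨fun a ha => ?_, fun a ha => absurd ha not_top_lt⟩
  obtain ⟨n, han, hNn⟩ := ((h.eventually (lt_mem_nhds ha)).and (eventually_ge_atTop N)).exists
  rw [SummationFilter.unconditional_filter, eventually_atTop]
  refine ⟨range n, fun T hT => han.trans_le (sum_le_sum_of_subset_of_nonneg hT ?_)⟩
  intro j _ hj
  exact hf j (hNn.trans (by simpa using hj))

theorem tendsto_sum_range_atTop_of_not_summable {f : ℕ → ℝ} {N : ℕ}
    (hf : ∀ j, N ≤ j → 0 ≤ f j) (h : ¬Summable f) :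
    Tendsto (fun n => ∑ j ∈ range n, f j) atTop atTop := by
  have htail : Tendsto (fun n => ∑ j ∈ range n, f (N + j)) atTop atTop := by
    refine (not_summable_iff_tendsto_nat_atTop_of_nonneg fun j => hf _ (by omega)).1 ?_
    simpa only [add_comm N] using (summable_nat_add_iff N).not.2 h
  refine (tendsto_add_atTop_iff_nat N).1 ?_
  simpa only [add_comm _ N, sum_range_add] using tendsto_atTop_add_const_left _ _ htail

theorem Memℓp.tendsto_atTop_zero {E : Type*} [NormedAddCommGroup E] {f : ℕ → E} {p : ℝ≥0∞}
    (hp : 0 < p.toReal) (hf : Memℓp f p) : Tendsto f atTop (𝓝 0) := by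
  have h := ((hf.summable hp).tendsto_atTop_zero).rpow_const (p := p.toReal⁻¹)
    (Or.inr (inv_nonneg.2 hp.le))
  rw [Real.zero_rpow (inv_ne_zero hp.ne')] at h
  refine tendsto_zero_iff_norm_tendsto_zero.2 (h.congr fun i => ?_)
  rw [← Real.rpow_mul (norm_nonneg _), mul_inv_cancel₀ hp.ne', Real.rpow_one]

theorem Filter.Tendsto.exists_max_Ici {α : Type*} [LinearOrder α] [TopologicalSpace α]
    [OrderTopology α] {u : ℕ → α} {L : α} {n : ℕ} (hu : Tendsto u atTop (𝓝 L))
    (hn : L < u n) : ∃ k, n ≤ k ∧ ∀ j, n ≤ j → u j ≤ u k := by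
  obtain ⟨N, hN⟩ := eventually_atTop.1 (hu.eventually (gt_mem_nhds hn))
  obtain ⟨k, hk, hmax⟩ := exists_max_image (Icc n (max n N)) u ⟨n, by simp⟩
  refine ⟨k, (mem_Icc.1 hk).1, fun j hj => ?_⟩
  rcases le_or_gt j (max n N) with h | h
  · exact hmax j (mem_Icc.2 ⟨hj, h⟩)
  · exact (hN j (le_of_max_le_right h.le)).le.trans (hmax n (by simp))

namespace BoundaryLayer

def zStar (k₁ k₂ : ℝ) : ℝ := ((13 : ℝ) / 7) ^ ((1 : ℝ) / 6) * delta1 k₁ k₂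

def LJ1rDeriv (k₁ k₂ z : ℝ) : ℝ := 6 * k₂ / z ^ 7 - 12 * k₁ / z ^ 13

def LJ1rDeriv2 (k₁ k₂ z : ℝ) : ℝ := 156 * k₁ / z ^ 14 - 42 * k₂ / z ^ 8

variable {k₁ k₂ : ℝ}

lemma rpow_one_div_six_pow_six {x : ℝ} (hx : 0 ≤ x) : (x ^ ((1 : ℝ) / 6)) ^ 6 = x := by
  rw [one_div]; exact_mod_cast Real.rpow_inv_natCast_pow hx (n := 6) (by norm_num)

lemma delta1_pos (hk₁ : 0 < k₁) (hk₂ : 0 < k₂) : 0 < delta1 k₁ k₂ := by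
  unfold delta1; positivity

lemma delta1_pow_six (hk₁ : 0 < k₁) (hk₂ : 0 < k₂) : delta1 k₁ k₂ ^ 6 = 2 * k₁ / k₂ :=
  rpow_one_div_six_pow_six (by positivity)

lemma gammaNNN_pos (hk₁ : 0 < k₁) (hk₂ : 0 < k₂) : 0 < gammaNNN k₁ k₂ := by
  unfold gammaNNN; positivity

lemma gammaNNN_pow_six (hk₁ : 0 < k₁) (hk₂ : 0 < k₂) :
    gammaNNN k₁ k₂ ^ 6 = 4097 / 4160 * delta1 k₁ k₂ ^ 6 := by
  rw [gammaNNN, mul_pow, rpow_one_div_six_pow_six (by positivity),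
    rpow_one_div_six_pow_six (by norm_num), delta1_pow_six hk₁ hk₂]
  norm_num [mul_comm]

lemma zStar_pos (hk₁ : 0 < k₁) (hk₂ : 0 < k₂) : 0 < zStar k₁ k₂ := by
  have := delta1_pos hk₁ hk₂; unfold zStar; positivity

lemma zStar_pow_six : zStar k₁ k₂ ^ 6 = 13 / 7 * delta1 k₁ k₂ ^ 6 := by
  rw [zStar, mul_pow, rpow_one_div_six_pow_six (by norm_num)]

lemma zc2_eq : zc2 k₁ k₂ = zStar k₁ k₂ / 2 := by
  rw [zc2, zStar]; ring

lemma gammaNNN_lt_delta1 (hk₁ : 0 < k₁) (hk₂ : 0 < k₂) : gammaNNN k₁ k₂ < delta1 k₁ k₂ := by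
  have hd := delta1_pos hk₁ hk₂
  refine (pow_lt_pow_iff_left₀ (gammaNNN_pos hk₁ hk₂).le hd.le (n := 6) (by norm_num)).1 ?_
  rw [gammaNNN_pow_six hk₁ hk₂]; nlinarith [pow_pos hd 6]

lemma delta1_lt_zStar (hk₁ : 0 < k₁) (hk₂ : 0 < k₂) : delta1 k₁ k₂ < zStar k₁ k₂ := by
  have hd := delta1_pos hk₁ hk₂
  refine (pow_lt_pow_iff_left₀ hd.le (zStar_pos hk₁ hk₂).le (n := 6) (by norm_num)).1 ?_
  rw [zStar_pow_six]; nlinarith [pow_pos hd 6]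

lemma gammaNNN_lt_zStar (hk₁ : 0 < k₁) (hk₂ : 0 < k₂) : gammaNNN k₁ k₂ < zStar k₁ k₂ :=
  (gammaNNN_lt_delta1 hk₁ hk₂).trans (delta1_lt_zStar hk₁ hk₂)

lemma zStar_lt_two_mul_gammaNNN (hk₁ : 0 < k₁) (hk₂ : 0 < k₂) :
    zStar k₁ k₂ < 2 * gammaNNN k₁ k₂ := by
  have hd := delta1_pos hk₁ hk₂
  refine (pow_lt_pow_iff_left₀ (zStar_pos hk₁ hk₂).le (by linarith [gammaNNN_pos hk₁ hk₂])
    (n := 6) (by norm_num)).1 ?_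
  rw [zStar_pow_six, mul_pow, gammaNNN_pow_six hk₁ hk₂]; nlinarith [pow_pos hd 6]

lemma LJ1rDeriv_eq (hk₁ : 0 < k₁) (hk₂ : 0 < k₂) {z : ℝ} (hz : z ≠ 0) :
    LJ1rDeriv k₁ k₂ z = 6 * k₂ * (z ^ 6 - delta1 k₁ k₂ ^ 6) / z ^ 13 := by
  rw [LJ1rDeriv, delta1_pow_six hk₁ hk₂]; field_simp; ring

lemma LJ1rDeriv2_eq (hk₁ : 0 < k₁) (hk₂ : 0 < k₂) {z : ℝ} (hz : z ≠ 0) :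
    LJ1rDeriv2 k₁ k₂ z = 42 * k₂ * (zStar k₁ k₂ ^ 6 - z ^ 6) / z ^ 14 := by
  rw [LJ1rDeriv2, zStar_pow_six, delta1_pow_six hk₁ hk₂]; field_simp; ring

lemma LJ1rDeriv_add_two_mul (hk₁ : 0 < k₁) (hk₂ : 0 < k₂) {z : ℝ} (hz : z ≠ 0) :
    LJ1rDeriv k₁ k₂ z + 2 * LJ1rDeriv k₁ k₂ (2 * z)
      = 195 / 32 * k₂ * (z ^ 6 - gammaNNN k₁ k₂ ^ 6) / z ^ 13 := by
  rw [LJ1rDeriv, LJ1rDeriv, gammaNNN_pow_six hk₁ hk₂, delta1_pow_six hk₁ hk₂]; field_simp; ring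

lemma hasDerivAt_LJ1r {z : ℝ} (hz : z ≠ 0) :
    HasDerivAt (LJ1r k₁ k₂) (LJ1rDeriv k₁ k₂ z) z := by
  have h : HasDerivAt (fun x => k₁ / x ^ 12 - k₂ / x ^ 6) _ z :=
    ((hasDerivAt_const z k₁).div (hasDerivAt_pow 12 z) (pow_ne_zero _ hz)).sub
      ((hasDerivAt_const z k₂).div (hasDerivAt_pow 6 z) (pow_ne_zero _ hz))
  exact h.congr_deriv (by rw [LJ1rDeriv]; field_simp; ring)

lemma hasDerivAt_LJ1rDeriv {z : ℝ} (hz : z ≠ 0) :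
    HasDerivAt (LJ1rDeriv k₁ k₂) (LJ1rDeriv2 k₁ k₂ z) z := by
  have h : HasDerivAt (fun x => 6 * k₂ / x ^ 7 - 12 * k₁ / x ^ 13) _ z :=
    ((hasDerivAt_const z (6 * k₂)).div (hasDerivAt_pow 7 z) (pow_ne_zero _ hz)).sub
      ((hasDerivAt_const z (12 * k₁)).div (hasDerivAt_pow 13 z) (pow_ne_zero _ hz))
  exact h.congr_deriv (by rw [LJ1rDeriv2]; field_simp; ring)

lemma continuousOn_LJ1r {s : Set ℝ} (hs : ∀ z ∈ s, 0 < z) : ContinuousOn (LJ1r k₁ k₂) s :=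
  fun z hz => (hasDerivAt_LJ1r (hs z hz).ne').continuousAt.continuousWithinAt

lemma continuousOn_LJ1rDeriv {s : Set ℝ} (hs : ∀ z ∈ s, 0 < z) :
    ContinuousOn (LJ1rDeriv k₁ k₂) s :=
  fun z hz => (hasDerivAt_LJ1rDeriv (hs z hz).ne').continuousAt.continuousWithinAt

lemma deriv_LJ1r_eqOn {s : Set ℝ} (hs : ∀ z ∈ s, 0 < z) :
    EqOn (deriv (LJ1r k₁ k₂)) (LJ1rDeriv k₁ k₂) s :=
  fun z hz => (hasDerivAt_LJ1r (hs z hz).ne').deriv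

lemma LJ1rDeriv_pos (hk₁ : 0 < k₁) (hk₂ : 0 < k₂) {z : ℝ} (hz : delta1 k₁ k₂ < z) :
    0 < LJ1rDeriv k₁ k₂ z := by
  have hd := delta1_pos hk₁ hk₂
  have hz₀ : 0 < z := hd.trans hz
  have h6 := pow_lt_pow_left₀ hz hd.le (n := 6) (by norm_num)
  rw [LJ1rDeriv_eq hk₁ hk₂ hz₀.ne']
  exact div_pos (by nlinarith) (pow_pos hz₀ _)

lemma strictMonoOn_LJ1rDeriv (hk₁ : 0 < k₁) (hk₂ : 0 < k₂) :
    StrictMonoOn (LJ1rDeriv k₁ k₂) (Ioc 0 (zStar k₁ k₂)) := by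
  refine strictMonoOn_of_deriv_pos (convex_Ioc _ _) (continuousOn_LJ1rDeriv fun z hz => hz.1)
    fun z hz => ?_
  rw [interior_Ioc] at hz
  have h6 := pow_lt_pow_left₀ hz.2 hz.1.le (n := 6) (by norm_num)
  rw [(hasDerivAt_LJ1rDeriv hz.1.ne').deriv, LJ1rDeriv2_eq hk₁ hk₂ hz.1.ne']
  exact div_pos (by nlinarith) (pow_pos hz.1 _)

lemma strictAntiOn_LJ1rDeriv (hk₁ : 0 < k₁) (hk₂ : 0 < k₂) :
    StrictAntiOn (LJ1rDeriv k₁ k₂) (Ici (zStar k₁ k₂)) := by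
  have hz₀ := zStar_pos hk₁ hk₂
  refine strictAntiOn_of_deriv_neg (convex_Ici _)
    (continuousOn_LJ1rDeriv fun z hz => hz₀.trans_le hz) fun z hz => ?_
  rw [interior_Ici] at hz
  have hz' : 0 < z := hz₀.trans hz
  have h6 := pow_lt_pow_left₀ hz hz₀.le (n := 6) (by norm_num)
  rw [(hasDerivAt_LJ1rDeriv hz'.ne').deriv, LJ1rDeriv2_eq hk₁ hk₂ hz'.ne']
  exact div_neg_of_neg_of_pos (by nlinarith) (pow_pos hz' _)

lemma strictMonoOn_LJ1r (hk₁ : 0 < k₁) (hk₂ : 0 < k₂) :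
    StrictMonoOn (LJ1r k₁ k₂) (Ici (delta1 k₁ k₂)) := by
  have hd := delta1_pos hk₁ hk₂
  refine strictMonoOn_of_deriv_pos (convex_Ici _)
    (continuousOn_LJ1r fun z hz => hd.trans_le hz) fun z hz => ?_
  rw [interior_Ici] at hz
  rw [(hasDerivAt_LJ1r (hd.trans hz).ne').deriv]
  exact LJ1rDeriv_pos hk₁ hk₂ hz

lemma convexOn_LJ1r (hk₁ : 0 < k₁) (hk₂ : 0 < k₂) :
    ConvexOn ℝ (Ioc 0 (zStar k₁ k₂)) (LJ1r k₁ k₂) := by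
  refine (StrictMonoOn.strictConvexOn_of_deriv (convex_Ioc _ _)
    (continuousOn_LJ1r fun z hz => hz.1) ?_).convexOn
  rw [interior_Ioc]
  exact ((strictMonoOn_LJ1rDeriv hk₁ hk₂).mono Ioo_subset_Ioc_self).congr
    (deriv_LJ1r_eqOn fun z hz => hz.1).symm

lemma strictConcaveOn_LJ1r (hk₁ : 0 < k₁) (hk₂ : 0 < k₂) :
    StrictConcaveOn ℝ (Ici (zStar k₁ k₂)) (LJ1r k₁ k₂) := by
  have hz₀ := zStar_pos hk₁ hk₂
  refine StrictAntiOn.strictConcaveOn_of_deriv (convex_Ici _)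
    (continuousOn_LJ1r fun z hz => hz₀.trans_le hz) ?_
  rw [interior_Ici]
  exact ((strictAntiOn_LJ1rDeriv hk₁ hk₂).mono Ioi_subset_Ici_self).congr
    (deriv_LJ1r_eqOn fun z hz => hz₀.trans hz).symm

lemma LJ1rDeriv_le_zStar (hk₁ : 0 < k₁) (hk₂ : 0 < k₂) {z : ℝ} (hz : 0 < z) :
    LJ1rDeriv k₁ k₂ z ≤ LJ1rDeriv k₁ k₂ (zStar k₁ k₂) := by
  rcases le_total z (zStar k₁ k₂) with h | h
  · exact (strictMonoOn_LJ1rDeriv hk₁ hk₂).monotoneOn ⟨hz, h⟩ ⟨zStar_pos hk₁ hk₂, le_rfl⟩ h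
  · exact (strictAntiOn_LJ1rDeriv hk₁ hk₂).antitoneOn (Set.mem_Ici.2 le_rfl) h h

lemma LJ1rDeriv_half_zStar_add_two_mul_neg (hk₁ : 0 < k₁) (hk₂ : 0 < k₂) :
    LJ1rDeriv k₁ k₂ (zStar k₁ k₂ / 2) + 2 * LJ1rDeriv k₁ k₂ (zStar k₁ k₂) < 0 := by
  have hz := zStar_pos hk₁ hk₂
  have hd : delta1 k₁ k₂ ^ 6 = 7 / 13 * zStar k₁ k₂ ^ 6 := by rw [zStar_pow_six]; ring
  have key : LJ1rDeriv k₁ k₂ (zStar k₁ k₂ / 2) + 2 * LJ1rDeriv k₁ k₂ (zStar k₁ k₂)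
      = k₂ / zStar k₁ k₂ ^ 7 * (6 * 8192 * (1 / 64 - 7 / 13) + 12 * 6 / 13) := by
    rw [LJ1rDeriv_eq hk₁ hk₂ (by positivity), LJ1rDeriv_eq hk₁ hk₂ hz.ne', hd]
    field_simp
    ring
  rw [key]
  exact mul_neg_of_pos_of_neg (by positivity) (by norm_num)

lemma LJ1rDeriv_add_two_mul_gammaNNN (hk₁ : 0 < k₁) (hk₂ : 0 < k₂) :
    LJ1rDeriv k₁ k₂ (gammaNNN k₁ k₂) + 2 * LJ1rDeriv k₁ k₂ (2 * gammaNNN k₁ k₂) = 0 := by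
  rw [LJ1rDeriv_add_two_mul hk₁ hk₂ (gammaNNN_pos hk₁ hk₂).ne', sub_self, mul_zero, zero_div]

lemma LJ1rDeriv_add_two_mul_pos (hk₁ : 0 < k₁) (hk₂ : 0 < k₂) {z : ℝ}
    (hz : gammaNNN k₁ k₂ < z) : 0 < LJ1rDeriv k₁ k₂ z + 2 * LJ1rDeriv k₁ k₂ (2 * z) := by
  have hg := gammaNNN_pos hk₁ hk₂
  have h6 := pow_lt_pow_left₀ hz hg.le (n := 6) (by norm_num)
  rw [LJ1rDeriv_add_two_mul hk₁ hk₂ (hg.trans hz).ne']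
  exact div_pos (by nlinarith) (pow_pos (hg.trans hz) _)

lemma LJ1r_add_LJ1r_two_mul (z : ℝ) :
    LJ1r k₁ k₂ z + LJ1r k₁ k₂ (2 * z)
      = 4097 / 4096 * k₁ * ((z ^ 6)⁻¹) ^ 2 - 65 / 64 * k₂ * (z ^ 6)⁻¹ := by
  simp only [LJ1r]; ring

lemma JCBGammaNNN_le (hk₁ : 0 < k₁) (hk₂ : 0 < k₂) (z : ℝ) :
    JCBGammaNNN k₁ k₂ ≤ LJ1r k₁ k₂ z + LJ1r k₁ k₂ (2 * z) := by
  have hd := delta1_pos hk₁ hk₂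
  have hk : 2 * k₁ = k₂ * delta1 k₁ k₂ ^ 6 := by rw [delta1_pow_six hk₁ hk₂]; field_simp
  have hv : 4097 * delta1 k₁ k₂ ^ 6 * (gammaNNN k₁ k₂ ^ 6)⁻¹ = 4160 := by
    rw [gammaNNN_pow_six hk₁ hk₂]; field_simp
  rw [JCBGammaNNN, LJ1r_add_LJ1r_two_mul, LJ1r_add_LJ1r_two_mul]
  set u := (z ^ 6)⁻¹
  set v := (gammaNNN k₁ k₂ ^ 6)⁻¹
  have key : 4097 / 4096 * k₁ * u ^ 2 - 65 / 64 * k₂ * u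
      - (4097 / 4096 * k₁ * v ^ 2 - 65 / 64 * k₂ * v)
      = 4097 / 8192 * (k₂ * delta1 k₁ k₂ ^ 6) * (u - v) ^ 2 := by
    linear_combination (4097 / 8192 * (u ^ 2 - v ^ 2)) * hk + (k₂ * (u - v) / 4096) * hv
  have : 0 ≤ 4097 / 8192 * (k₂ * delta1 k₁ k₂ ^ 6) * (u - v) ^ 2 := by positivity
  linarith

def cellEnergy (k₁ k₂ x y : ℝ) : ℝ :=
  LJ1r k₁ k₂ (x + y) + LJ1r k₁ k₂ x / 2 + LJ1r k₁ k₂ y / 2 - JCBGammaNNN k₁ k₂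

lemma cellEnergy_nonneg (hk₁ : 0 < k₁) (hk₂ : 0 < k₂) {x y : ℝ}
    (hx : x ∈ Ioc 0 (zStar k₁ k₂)) (hy : y ∈ Ioc 0 (zStar k₁ k₂)) :
    0 ≤ cellEnergy k₁ k₂ x y := by
  have hmid := (convexOn_LJ1r hk₁ hk₂).2 hx hy (by norm_num : (0 : ℝ) ≤ 1 / 2)
    (by norm_num : (0 : ℝ) ≤ 1 / 2) (by norm_num)
  have hJCB := JCBGammaNNN_le hk₁ hk₂ ((x + y) / 2)
  rw [smul_eq_mul, smul_eq_mul, smul_eq_mul, smul_eq_mul,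
    show 1 / 2 * x + 1 / 2 * y = (x + y) / 2 by ring] at hmid
  rw [show 2 * ((x + y) / 2) = x + y by ring] at hJCB
  rw [cellEnergy]; linarith

lemma cellEnergy_gammaNNN : cellEnergy k₁ k₂ (gammaNNN k₁ k₂) (gammaNNN k₁ k₂) = 0 := by
  rw [cellEnergy, JCBGammaNNN, two_mul]; ring

def energy (k₁ k₂ : ℝ) (ρ : ℕ → ℝ) : ℝ :=
  LJ1r k₁ k₂ (ρ 0) / 2 + ∑' j, cellEnergy k₁ k₂ (ρ j) (ρ (j + 1))

lemma LJ1_of_pos {z : ℝ} (hz : 0 < z) : LJ1 k₁ k₂ z = LJ1r k₁ k₂ z := if_pos hz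

lemma LJ1_of_nonpos {z : ℝ} (hz : z ≤ 0) : LJ1 k₁ k₂ z = ⊤ := if_neg hz.not_gt

lemma LJ1_ne_bot (z : ℝ) : LJ1 k₁ k₂ z ≠ ⊥ := by
  unfold LJ1; split_ifs
  exacts [EReal.coe_ne_bot _, top_ne_bot]

lemma half_mul_LJ1_ne_bot (z : ℝ) : (((1 : ℝ) / 2 : ℝ) : EReal) * LJ1 k₁ k₂ z ≠ ⊥ := by
  rcases lt_or_ge 0 z with hz | hz
  · rw [LJ1_of_pos hz, ← EReal.coe_mul]; exact EReal.coe_ne_bot _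
  · rw [LJ1_of_nonpos hz, EReal.coe_mul_top_of_pos (by norm_num)]; exact top_ne_bot

lemma Fcell_ne_bot (a b : ℝ) : Fcell k₁ k₂ a b ≠ ⊥ := by
  rw [Fcell, sub_eq_add_neg, ← EReal.coe_neg]
  refine EReal.add_ne_bot_iff.2 ⟨EReal.add_ne_bot_iff.2 ⟨EReal.add_ne_bot_iff.2
    ⟨LJ1_ne_bot _, half_mul_LJ1_ne_bot _⟩, half_mul_LJ1_ne_bot _⟩, EReal.coe_ne_bot _⟩

lemma Fcell_sub_gammaNNN {x y : ℝ} (hx : 0 < x) (hy : 0 < y) :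
    Fcell k₁ k₂ (x - gammaNNN k₁ k₂) (y - gammaNNN k₁ k₂) = cellEnergy k₁ k₂ x y := by
  have hxy : 2 * (gammaNNN k₁ k₂ + (x - gammaNNN k₁ k₂ + (y - gammaNNN k₁ k₂)) / 2) = x + y := by
    ring
  simp only [Fcell, LJ2, hxy, add_sub_cancel, LJ1_of_pos hx, LJ1_of_pos hy,
    LJ1_of_pos (add_pos hx hy), cellEnergy]
  norm_cast
  ring

lemma Fcell_sub_gammaNNN_of_nonpos {x : ℝ} (hx : x ≤ 0) (y : ℝ) :
    Fcell k₁ k₂ (x - gammaNNN k₁ k₂) y = ⊤ := by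
  rw [Fcell, LJ2, add_sub_cancel, LJ1_of_nonpos hx, EReal.coe_mul_top_of_pos (by norm_num),
    EReal.add_top_of_ne_bot (LJ1_ne_bot _), EReal.top_add_of_ne_bot (half_mul_LJ1_ne_bot _),
    EReal.top_sub_coe]

lemma Bgam_sub_gammaNNN {σ : ℕ → ℝ} (hσ : ∀ j, 0 < σ j)
    (hsum : Summable fun j => cellEnergy k₁ k₂ (σ j) (σ (j + 1))) :
    Bgam k₁ k₂ (fun j => σ j - gammaNNN k₁ k₂) = energy k₁ k₂ σ := by
  simp only [Bgam, add_sub_cancel, LJ1_of_pos (hσ 0), Fcell_sub_gammaNNN (hσ _) (hσ _),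
    ← EReal.coe_tsum hsum, energy]
  norm_cast
  ring

lemma pos_and_summable_of_tsum_Fcell_ne_top (hk₁ : 0 < k₁) (hk₂ : 0 < k₂) {σ : ℕ → ℝ}
    (hσ : Tendsto σ atTop (𝓝 (gammaNNN k₁ k₂)))
    (h : ∑' j, Fcell k₁ k₂ (σ j - gammaNNN k₁ k₂) (σ (j + 1) - gammaNNN k₁ k₂) ≠ ⊤) :
    (∀ j, 0 < σ j) ∧ Summable fun j => cellEnergy k₁ k₂ (σ j) (σ (j + 1)) := by
  obtain ⟨N, hN⟩ := eventually_atTop.1 <| hσ.eventually <|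
    Ioo_mem_nhds (gammaNNN_pos hk₁ hk₂) (gammaNNN_lt_zStar hk₁ hk₂)
  have hcell : ∀ j, N ≤ j → 0 ≤ cellEnergy k₁ k₂ (σ j) (σ (j + 1)) := fun j hj =>
    cellEnergy_nonneg hk₁ hk₂ (Ioo_subset_Ioc_self (hN j hj))
      (Ioo_subset_Ioc_self (hN _ (by omega)))
  have hFcell : ∀ j, N ≤ j →
      0 ≤ Fcell k₁ k₂ (σ j - gammaNNN k₁ k₂) (σ (j + 1) - gammaNNN k₁ k₂) := fun j hj => by
    rw [Fcell_sub_gammaNNN (hN j hj).1 (hN _ (by omega)).1]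
    exact EReal.coe_nonneg.2 (hcell j hj)
  have hpos : ∀ j, 0 < σ j := by
    by_contra! ⟨j, hj⟩
    refine h (hasSum_top_of_tendsto_sum_range hFcell (tendsto_const_nhds.congr' ?_)).tsum_eq
    filter_upwards [eventually_gt_atTop j] with n hn
    rw [← add_sum_erase _ _ (mem_range.2 hn), Fcell_sub_gammaNNN_of_nonpos hj,
      EReal.top_add_of_ne_bot]
    exact sum_induction _ (· ≠ ⊥) (fun a b ha hb => EReal.add_ne_bot_iff.2 ⟨ha, hb⟩)
      EReal.zero_ne_bot fun i _ => Fcell_ne_bot _ _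
  refine ⟨hpos, by_contra fun hns => h (hasSum_top_of_tendsto_sum_range hFcell ?_).tsum_eq⟩
  simp only [Fcell_sub_gammaNNN (hpos _) (hpos _), ← EReal.coe_finset_sum]
  exact EReal.tendsto_coe_nhds_top_iff.2 (tendsto_sum_range_atTop_of_not_summable hcell hns)

structure IsMinimizer (k₁ k₂ : ℝ) (ρ : ℕ → ℝ) : Prop where
  tendsto : Tendsto ρ atTop (𝓝 (gammaNNN k₁ k₂))
  le : ∀ σ : ℕ → ℝ, Tendsto σ atTop (𝓝 (gammaNNN k₁ k₂)) →
    Bgam k₁ k₂ (fun j => ρ j - gammaNNN k₁ k₂) ≤ Bgam k₁ k₂ (fun j => σ j - gammaNNN k₁ k₂)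

lemma isMinimizer_gammaNNN_add {r : ℕ → ℝ} (hr₂ : Memℓp r 2)
    (hmin : Bgam k₁ k₂ r = sInf {y : EReal | ∃ s : ℕ → ℝ,
      Filter.Tendsto s Filter.atTop (nhds 0) ∧ y = Bgam k₁ k₂ s}) :
    IsMinimizer k₁ k₂ (fun i => gammaNNN k₁ k₂ + r i) := by
  refine ⟨by simpa using (hr₂.tendsto_atTop_zero (by norm_num)).const_add (gammaNNN k₁ k₂),
    fun σ hσ => ?_⟩
  simp only [add_sub_cancel_left]
  rw [hmin]
  exact sInf_le ⟨_, by simpa using hσ.sub_const (gammaNNN k₁ k₂), rfl⟩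

def partialEnergy (k₁ k₂ : ℝ) (ρ : ℕ → ℝ) (n : ℕ) : ℝ :=
  LJ1r k₁ k₂ (ρ 0) / 2 + ∑ j ∈ range n, cellEnergy k₁ k₂ (ρ j) (ρ (j + 1))

lemma partialEnergy_zero (ρ : ℕ → ℝ) : partialEnergy k₁ k₂ ρ 0 = LJ1r k₁ k₂ (ρ 0) / 2 := by
  rw [partialEnergy, sum_range_zero, add_zero]

lemma partialEnergy_succ (ρ : ℕ → ℝ) (n : ℕ) :
    partialEnergy k₁ k₂ ρ (n + 1)
      = partialEnergy k₁ k₂ ρ n + cellEnergy k₁ k₂ (ρ n) (ρ (n + 1)) := by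
  rw [partialEnergy, partialEnergy, sum_range_succ, add_assoc]

lemma partialEnergy_congr {ρ σ : ℕ → ℝ} {n : ℕ} (h : ∀ j ≤ n, σ j = ρ j) :
    partialEnergy k₁ k₂ σ n = partialEnergy k₁ k₂ ρ n := by
  rw [partialEnergy, partialEnergy, h 0 (Nat.zero_le _)]
  congr 1
  refine sum_congr rfl fun j hj => ?_
  rw [h j (mem_range.1 hj).le, h (j + 1) (mem_range.1 hj)]

def insertAt {α : Type*} (f : ℕ → α) (i : ℕ) (x : α) (j : ℕ) : α :=
  if j < i then f j else if j = i then x else f (j - 1)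

section insertAt

variable {α : Type*} (f : ℕ → α) (x : α)

lemma insertAt_of_lt {i j : ℕ} (h : j < i) : insertAt f i x j = f j := if_pos h

lemma insertAt_self (i : ℕ) : insertAt f i x i = x := by
  rw [insertAt, if_neg (lt_irrefl i), if_pos rfl]

lemma insertAt_of_gt {i j : ℕ} (h : i < j) : insertAt f i x j = f (j - 1) := by
  rw [insertAt, if_neg (by omega), if_neg (by omega)]

lemma insertAt_add_succ (i j : ℕ) : insertAt f i x (j + (i + 1)) = f (j + i) := by
  rw [insertAt_of_gt f x (by omega), Nat.add_succ_sub_one]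

end insertAt

def leftBond (f : ℝ → ℝ) (ρ : ℕ → ℝ) : ℕ → ℝ → ℝ
  | 0, _ => 0
  | i + 1, x => f (ρ i + x)

lemma leftBond_mem {f : ℝ → ℝ} {ρ : ℕ → ℝ} {s : Set ℝ} {x : ℝ} (hρ : ∀ j, 0 < ρ j)
    (h₀ : 0 ∈ s) (hf : ∀ y, x < y → f y ∈ s) (i : ℕ) : leftBond f ρ i x ∈ s := by
  cases i with
  | zero => exact h₀
  | succ n => exact hf _ (by linarith [hρ n])

/-- `c` is the spacing to the right of site `i`: `ρ (i + 1)` when site `i` is moved, `ρ i` when an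
atom is inserted in front of site `i`. -/
def siteEnergy (k₁ k₂ : ℝ) (ρ : ℕ → ℝ) (i : ℕ) (c x : ℝ) : ℝ :=
  LJ1r k₁ k₂ x + LJ1r k₁ k₂ (x + c) + leftBond (LJ1r k₁ k₂) ρ i x

lemma hasDerivAt_siteEnergy {ρ : ℕ → ℝ} (hρ : ∀ j, 0 < ρ j) (i : ℕ) {c x : ℝ} (hc : 0 < c)
    (hx : 0 < x) :
    HasDerivAt (siteEnergy k₁ k₂ ρ i c)
      (LJ1rDeriv k₁ k₂ x + LJ1rDeriv k₁ k₂ (x + c) + leftBond (LJ1rDeriv k₁ k₂) ρ i x) x := by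
  refine ((hasDerivAt_LJ1r hx.ne').add
    ((hasDerivAt_LJ1r (by linarith)).comp_add_const x c)).add ?_
  cases i with
  | zero => exact hasDerivAt_const x 0
  | succ n => exact (hasDerivAt_LJ1r (by linarith [hρ n])).comp_const_add (ρ n) x

namespace IsMinimizer

variable {ρ : ℕ → ℝ}

lemma pos_and_summable (hk₁ : 0 < k₁) (hk₂ : 0 < k₂) (hρ : IsMinimizer k₁ k₂ ρ) :
    (∀ j, 0 < ρ j) ∧ Summable fun j => cellEnergy k₁ k₂ (ρ j) (ρ (j + 1)) := by
  refine pos_and_summable_of_tsum_Fcell_ne_top hk₁ hk₂ hρ.tendsto fun htop => ?_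
  have hconst := hρ.le (fun _ => gammaNNN k₁ k₂) tendsto_const_nhds
  rw [Bgam_sub_gammaNNN (fun _ => gammaNNN_pos hk₁ hk₂) (by simp [cellEnergy_gammaNNN]),
    Bgam, htop, EReal.add_top_of_ne_bot (half_mul_LJ1_ne_bot _)] at hconst
  exact EReal.coe_ne_top _ (top_le_iff.1 hconst)

lemma pos (hk₁ : 0 < k₁) (hk₂ : 0 < k₂) (hρ : IsMinimizer k₁ k₂ ρ) (j : ℕ) : 0 < ρ j :=
  (hρ.pos_and_summable hk₁ hk₂).1 j

lemma partialEnergy_le (hk₁ : 0 < k₁) (hk₂ : 0 < k₂) (hρ : IsMinimizer k₁ k₂ ρ) {σ : ℕ → ℝ}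
    {m n : ℕ} (hσ : ∀ j, 0 < σ j) (htail : ∀ j, σ (j + m) = ρ (j + n)) :
    partialEnergy k₁ k₂ ρ n ≤ partialEnergy k₁ k₂ σ m := by
  obtain ⟨-, hρsum⟩ := hρ.pos_and_summable hk₁ hk₂
  have hcell : ∀ j, cellEnergy k₁ k₂ (σ (j + m)) (σ (j + m + 1))
      = cellEnergy k₁ k₂ (ρ (j + n)) (ρ (j + n + 1)) := fun j => by
    rw [htail, Nat.add_right_comm, htail, Nat.add_right_comm]
  have hσlim : Tendsto σ atTop (𝓝 (gammaNNN k₁ k₂)) :=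
    (tendsto_add_atTop_iff_nat m).1 <| by
      simpa only [htail] using (tendsto_add_atTop_iff_nat n).2 hρ.tendsto
  have hσsum : Summable fun j => cellEnergy k₁ k₂ (σ j) (σ (j + 1)) :=
    (summable_nat_add_iff m).1 <| by simpa only [hcell] using (summable_nat_add_iff n).2 hρsum
  have h := hρ.le σ hσlim
  rw [Bgam_sub_gammaNNN (hρ.pos hk₁ hk₂) hρsum, Bgam_sub_gammaNNN hσ hσsum,
    EReal.coe_le_coe_iff, energy, energy, ← hρsum.sum_add_tsum_nat_add n,
    ← hσsum.sum_add_tsum_nat_add m] at h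
  simp only [hcell] at h
  rw [partialEnergy, partialEnergy]
  linarith

lemma siteEnergy_le (hk₁ : 0 < k₁) (hk₂ : 0 < k₂) (hρ : IsMinimizer k₁ k₂ ρ) (i : ℕ) {x : ℝ}
    (hx : 0 < x) : siteEnergy k₁ k₂ ρ i (ρ (i + 1)) (ρ i) ≤ siteEnergy k₁ k₂ ρ i (ρ (i + 1)) x := by
  have hpos : ∀ j, 0 < Function.update ρ i x j := fun j => by
    rcases eq_or_ne j i with rfl | hj
    · rwa [Function.update_self]
    · rw [Function.update_of_ne hj]; exact hρ.pos hk₁ hk₂ j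
  have h := hρ.partialEnergy_le hk₁ hk₂ hpos (m := i + 1) (n := i + 1)
    fun j => Function.update_of_ne (by omega) _ _
  simp only [siteEnergy]
  cases i with
  | zero =>
    simp only [partialEnergy_succ, partialEnergy_zero, zero_add, Function.update_self,
      Function.update_of_ne one_ne_zero, cellEnergy] at h
    simp only [leftBond, zero_add]
    linarith
  | succ n =>
    rw [partialEnergy_succ, partialEnergy_succ, partialEnergy_succ, partialEnergy_succ,
      partialEnergy_congr (σ := Function.update ρ (n + 1) x) (ρ := ρ)
        fun j hj => Function.update_of_ne (by omega) _ _] at h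
    simp only [Function.update_self, Function.update_of_ne (Nat.lt_succ_self n).ne,
      Function.update_of_ne (Nat.lt_succ_self (n + 1)).ne', cellEnergy] at h
    simp only [leftBond]
    linarith

lemma JCBGammaNNN_add_leftBond_le (hk₁ : 0 < k₁) (hk₂ : 0 < k₂) (hρ : IsMinimizer k₁ k₂ ρ)
    (i : ℕ) {x : ℝ} (hx : 0 < x) :
    JCBGammaNNN k₁ k₂ + leftBond (LJ1r k₁ k₂) ρ i (ρ i) ≤ siteEnergy k₁ k₂ ρ i (ρ i) x := by
  have hpos : ∀ j, 0 < insertAt ρ i x j := fun j => by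
    unfold insertAt; split_ifs
    exacts [hρ.pos hk₁ hk₂ _, hx, hρ.pos hk₁ hk₂ _]
  have h := hρ.partialEnergy_le hk₁ hk₂ hpos (m := i + 1) (n := i) (insertAt_add_succ ρ x i)
  simp only [siteEnergy]
  cases i with
  | zero =>
    simp only [partialEnergy_succ, partialEnergy_zero, insertAt_self, zero_add,
      insertAt_of_gt ρ x zero_lt_one, Nat.sub_self, cellEnergy] at h
    simp only [leftBond, add_zero]
    linarith
  | succ n =>
    rw [partialEnergy_succ, partialEnergy_succ, partialEnergy_succ,
      partialEnergy_congr (σ := insertAt ρ (n + 1) x) (ρ := ρ)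
        fun j hj => insertAt_of_lt ρ x (by omega)] at h
    simp only [insertAt_of_lt ρ x (Nat.lt_succ_self n), insertAt_self,
      insertAt_of_gt ρ x (by omega : n + 1 < n + 1 + 1), Nat.add_sub_cancel, cellEnergy] at h
    simp only [leftBond]
    linarith

lemma eulerLagrange (hk₁ : 0 < k₁) (hk₂ : 0 < k₂) (hρ : IsMinimizer k₁ k₂ ρ) (i : ℕ) :
    LJ1rDeriv k₁ k₂ (ρ i) + LJ1rDeriv k₁ k₂ (ρ i + ρ (i + 1))
      + leftBond (LJ1rDeriv k₁ k₂) ρ i (ρ i) = 0 := by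
  have hpos := hρ.pos hk₁ hk₂
  have hmin : IsMinOn (siteEnergy k₁ k₂ ρ i (ρ (i + 1))) (Ioi 0) (ρ i) := fun x hx =>
    hρ.siteEnergy_le hk₁ hk₂ i hx
  exact (hmin.isLocalMin (Ioi_mem_nhds (hpos i))).hasDerivAt_eq_zero
    (hasDerivAt_siteEnergy hpos i (hpos (i + 1)) (hpos i))

lemma le_delta1 (hk₁ : 0 < k₁) (hk₂ : 0 < k₂) (hρ : IsMinimizer k₁ k₂ ρ) (i : ℕ) :
    ρ i ≤ delta1 k₁ k₂ := by
  by_contra! h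
  have hpos := hρ.pos hk₁ hk₂
  have hleft : 0 ≤ leftBond (LJ1rDeriv k₁ k₂) ρ i (ρ i) :=
    leftBond_mem (s := Ici 0) hpos (le_refl (0 : ℝ))
      (fun y hy => (LJ1rDeriv_pos hk₁ hk₂ (h.trans hy)).le) i
  have hsite := LJ1rDeriv_pos hk₁ hk₂ h
  have hbond := LJ1rDeriv_pos hk₁ hk₂
    (show delta1 k₁ k₂ < ρ i + ρ (i + 1) by linarith [hpos (i + 1)])
  linarith [hρ.eulerLagrange hk₁ hk₂ i]

lemma zStar_div_two_lt (hk₁ : 0 < k₁) (hk₂ : 0 < k₂) (hρ : IsMinimizer k₁ k₂ ρ) (i : ℕ) :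
    zStar k₁ k₂ / 2 < ρ i := by
  by_contra! h
  have hpos := hρ.pos hk₁ hk₂
  have hz := zStar_pos hk₁ hk₂
  have hleft : leftBond (LJ1rDeriv k₁ k₂) ρ i (ρ i) ≤ LJ1rDeriv k₁ k₂ (zStar k₁ k₂) :=
    leftBond_mem (s := Iic _) hpos (LJ1rDeriv_pos hk₁ hk₂ (delta1_lt_zStar hk₁ hk₂)).le
      (fun y hy => LJ1rDeriv_le_zStar hk₁ hk₂ ((hpos i).trans hy)) i
  have hsite : LJ1rDeriv k₁ k₂ (ρ i) ≤ LJ1rDeriv k₁ k₂ (zStar k₁ k₂ / 2) :=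
    (strictMonoOn_LJ1rDeriv hk₁ hk₂).monotoneOn ⟨hpos i, by linarith⟩
      ⟨by positivity, by linarith⟩ h
  have hbond := LJ1rDeriv_le_zStar hk₁ hk₂ (add_pos (hpos i) (hpos (i + 1)))
  linarith [hρ.eulerLagrange hk₁ hk₂ i, LJ1rDeriv_half_zStar_add_two_mul_neg hk₁ hk₂]

lemma gammaNNN_le_zero (hk₁ : 0 < k₁) (hk₂ : 0 < k₂) (hρ : IsMinimizer k₁ k₂ ρ) :
    gammaNNN k₁ k₂ ≤ ρ 0 := by
  by_contra! h
  have hins := hρ.JCBGammaNNN_add_leftBond_le hk₁ hk₂ 0 (gammaNNN_pos hk₁ hk₂)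
  simp only [siteEnergy, leftBond, add_zero, JCBGammaNNN] at hins
  have hz := hρ.zStar_div_two_lt hk₁ hk₂ 0
  have h2γ := zStar_lt_two_mul_gammaNNN hk₁ hk₂
  have hδ := delta1_lt_zStar hk₁ hk₂
  have := strictMonoOn_LJ1r hk₁ hk₂ (show delta1 k₁ k₂ ≤ gammaNNN k₁ k₂ + ρ 0 by linarith)
    (show delta1 k₁ k₂ ≤ 2 * gammaNNN k₁ k₂ by linarith)
    (show gammaNNN k₁ k₂ + ρ 0 < 2 * gammaNNN k₁ k₂ by linarith)
  linarith

lemma gammaNNN_le_succ (hk₁ : 0 < k₁) (hk₂ : 0 < k₂) (hρ : IsMinimizer k₁ k₂ ρ) {i : ℕ}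
    (hi : gammaNNN k₁ k₂ ≤ ρ i) : gammaNNN k₁ k₂ ≤ ρ (i + 1) := by
  by_contra! h
  have hpos := hρ.pos hk₁ hk₂
  have hγ := gammaNNN_pos hk₁ hk₂
  have hz : zStar k₁ k₂ ≤ gammaNNN k₁ k₂ + ρ (i + 1) := by
    linarith [hρ.zStar_div_two_lt hk₁ hk₂ (i + 1), zStar_lt_two_mul_gammaNNN hk₁ hk₂]
  have hins := hρ.JCBGammaNNN_add_leftBond_le hk₁ hk₂ (i + 1) hγ
  simp only [siteEnergy, leftBond, JCBGammaNNN] at hins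
  rcases hi.eq_or_lt with heq | hlt
  · -- inserting an atom at spacing `γ` next to a spacing `γ` costs nothing, so `x = γ` minimizes
    have hmin : IsMinOn (siteEnergy k₁ k₂ ρ (i + 1) (ρ (i + 1))) (Ioi 0) (gammaNNN k₁ k₂) :=
      isMinOn_iff.2 fun x hx => by
        have := hρ.JCBGammaNNN_add_leftBond_le hk₁ hk₂ (i + 1) hx
        simp only [siteEnergy, leftBond, JCBGammaNNN, ← heq, two_mul] at this ⊢
        linarith
    have hd := (hmin.isLocalMin (Ioi_mem_nhds hγ)).hasDerivAt_eq_zero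
      (hasDerivAt_siteEnergy hpos (i + 1) (hpos (i + 1)) hγ)
    simp only [leftBond, ← heq, ← two_mul] at hd
    have := strictAntiOn_LJ1rDeriv hk₁ hk₂ hz
      (show zStar k₁ k₂ ≤ 2 * gammaNNN k₁ k₂ by linarith)
      (show gammaNNN k₁ k₂ + ρ (i + 1) < 2 * gammaNNN k₁ k₂ by linarith)
    linarith [LJ1rDeriv_add_two_mul_gammaNNN hk₁ hk₂]
  · have := (strictConcaveOn_LJ1r hk₁ hk₂).map_add_lt_map_add hz
      (show zStar k₁ k₂ ≤ ρ i + gammaNNN k₁ k₂ by linarith)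
      (show gammaNNN k₁ k₂ + ρ (i + 1) < 2 * gammaNNN k₁ k₂ by linarith)
      (show 2 * gammaNNN k₁ k₂ < ρ i + gammaNNN k₁ k₂ by linarith) (c := ρ i + ρ (i + 1))
      (by ring)
    linarith

lemma gammaNNN_le (hk₁ : 0 < k₁) (hk₂ : 0 < k₂) (hρ : IsMinimizer k₁ k₂ ρ) (i : ℕ) :
    gammaNNN k₁ k₂ ≤ ρ i := by
  induction i with
  | zero => exact hρ.gammaNNN_le_zero hk₁ hk₂
  | succ i ih => exact hρ.gammaNNN_le_succ hk₁ hk₂ ih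

lemma mem_Ioc_zStar (hk₁ : 0 < k₁) (hk₂ : 0 < k₂) (hρ : IsMinimizer k₁ k₂ ρ) (i : ℕ) :
    ρ i ∈ Ioc 0 (zStar k₁ k₂) :=
  ⟨hρ.pos hk₁ hk₂ i, (hρ.le_delta1 hk₁ hk₂ i).trans (delta1_lt_zStar hk₁ hk₂).le⟩

lemma two_mul_gammaNNN_le_add (hk₁ : 0 < k₁) (hk₂ : 0 < k₂) (hρ : IsMinimizer k₁ k₂ ρ)
    (i : ℕ) : 2 * gammaNNN k₁ k₂ ≤ ρ i + ρ (i + 1) := by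
  linarith [hρ.gammaNNN_le hk₁ hk₂ i, hρ.gammaNNN_le hk₁ hk₂ (i + 1)]

lemma add_mem_Ici_zStar (hk₁ : 0 < k₁) (hk₂ : 0 < k₂) (hρ : IsMinimizer k₁ k₂ ρ) (i : ℕ) :
    ρ i + ρ (i + 1) ∈ Ici (zStar k₁ k₂) :=
  (zStar_lt_two_mul_gammaNNN hk₁ hk₂).le.trans (hρ.two_mul_gammaNNN_le_add hk₁ hk₂ i)

lemma not_eq_gammaNNN_and_eq_gammaNNN (hk₁ : 0 < k₁) (hk₂ : 0 < k₂)
    (hρ : IsMinimizer k₁ k₂ ρ) (i : ℕ) :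
    ¬(ρ i = gammaNNN k₁ k₂ ∧ ρ (i + 1) = gammaNNN k₁ k₂) := by
  have h2γ := LJ1rDeriv_add_two_mul_gammaNNN hk₁ hk₂
  induction i with
  | zero =>
    rintro ⟨h₀, h₁⟩
    have hEL := hρ.eulerLagrange hk₁ hk₂ 0
    simp only [leftBond, zero_add, h₀, h₁, ← two_mul, add_zero] at hEL
    have := LJ1rDeriv_pos hk₁ hk₂
      ((delta1_lt_zStar hk₁ hk₂).trans (zStar_lt_two_mul_gammaNNN hk₁ hk₂))
    linarith
  | succ i ih =>
    rintro ⟨h₁, h₂⟩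
    refine ih ⟨?_, h₁⟩
    have hEL := hρ.eulerLagrange hk₁ hk₂ (i + 1)
    simp only [leftBond, h₁, h₂, ← two_mul] at hEL
    have hbond := hρ.add_mem_Ici_zStar hk₁ hk₂ i
    rw [h₁] at hbond
    have := (strictAntiOn_LJ1rDeriv hk₁ hk₂).injOn hbond
      (zStar_lt_two_mul_gammaNNN hk₁ hk₂).le (by linarith)
    linarith

lemma add_le_two_mul_gammaNNN_of_le_of_le (hk₁ : 0 < k₁) (hk₂ : 0 < k₂)
    (hρ : IsMinimizer k₁ k₂ ρ) (k : ℕ) (h₁ : ρ k + ρ (k + 1) ≤ ρ (k + 1) + ρ (k + 2))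
    (h₂ : ρ (k + 2) + ρ (k + 3) ≤ ρ (k + 1) + ρ (k + 2)) :
    ρ (k + 1) + ρ (k + 2) ≤ 2 * gammaNNN k₁ k₂ := by
  by_contra! h
  set B := ρ (k + 1) + ρ (k + 2)
  have hanti := (strictAntiOn_LJ1rDeriv hk₁ hk₂).antitoneOn
  have hmono := (strictMonoOn_LJ1rDeriv hk₁ hk₂).monotoneOn
  have hmem := hρ.add_mem_Ici_zStar hk₁ hk₂
  have hEL₁ := hρ.eulerLagrange hk₁ hk₂ (k + 1)
  have hEL₂ := hρ.eulerLagrange hk₁ hk₂ (k + 2)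
  have hb₁ := hanti (hmem k) (hmem (k + 1)) h₁
  have hb₂ := hanti (hmem (k + 2)) (hmem (k + 1)) h₂
  simp only [leftBond, add_assoc, Nat.reduceAdd] at hEL₁ hEL₂ hb₁ hb₂
  have hs₁ := hρ.mem_Ioc_zStar hk₁ hk₂ (k + 1)
  have hs₂ := hρ.mem_Ioc_zStar hk₁ hk₂ (k + 2)
  have hζ : B / 2 ∈ Ioc 0 (zStar k₁ k₂) := by
    constructor <;> linarith [hs₁.1, hs₁.2, hs₂.1, hs₂.2]
  have hpos := LJ1rDeriv_add_two_mul_pos hk₁ hk₂ (show gammaNNN k₁ k₂ < B / 2 by linarith)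
  rw [mul_div_cancel₀ B two_ne_zero] at hpos
  rcases le_total (ρ (k + 1)) (ρ (k + 2)) with hle | hle
  · linarith [hmono hζ hs₂ (by linarith)]
  · linarith [hmono hζ hs₁ (by linarith)]

lemma tendsto_add_succ (hρ : IsMinimizer k₁ k₂ ρ) :
    Tendsto (fun i => ρ i + ρ (i + 1)) atTop (𝓝 (2 * gammaNNN k₁ k₂)) := by
  rw [two_mul]; exact hρ.tendsto.add ((tendsto_add_atTop_iff_nat 1).2 hρ.tendsto)

lemma add_succ_lt (hk₁ : 0 < k₁) (hk₂ : 0 < k₂) (hρ : IsMinimizer k₁ k₂ ρ) (i : ℕ) :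
    ρ (i + 1) + ρ (i + 2) < ρ i + ρ (i + 1) := by
  by_contra! h
  have hγ := hρ.gammaNNN_le hk₁ hk₂
  rcases (hρ.two_mul_gammaNNN_le_add hk₁ hk₂ (i + 1)).eq_or_lt with heq | hlt
  · exact hρ.not_eq_gammaNNN_and_eq_gammaNNN hk₁ hk₂ i
      ⟨by linarith [hγ i, hγ (i + 1), hγ (i + 2)], by linarith [hγ i, hγ (i + 1), hγ (i + 2)]⟩
  obtain ⟨k, hik, hmax⟩ := hρ.tendsto_add_succ.exists_max_Ici hlt
  obtain ⟨k, rfl⟩ : ∃ k', k = k' + 1 := ⟨k - 1, by omega⟩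
  have h₁ : ρ k + ρ (k + 1) ≤ ρ (k + 1) + ρ (k + 2) := by
    rcases (Nat.le_of_succ_le_succ hik).eq_or_lt with rfl | hik'
    · exact h.trans (hmax _ le_rfl)
    · exact hmax k hik'
  have := hρ.add_le_two_mul_gammaNNN_of_le_of_le hk₁ hk₂ k h₁ (hmax (k + 2) (by omega))
  linarith [hmax (i + 1) le_rfl]

lemma antitone (hk₁ : 0 < k₁) (hk₂ : 0 < k₂) (hρ : IsMinimizer k₁ k₂ ρ) (i : ℕ) :
    ρ (i + 1) ≤ ρ i := by
  have hmem := hρ.add_mem_Ici_zStar hk₁ hk₂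
  have hleft : leftBond (LJ1rDeriv k₁ k₂) ρ i (ρ i)
      ≤ LJ1rDeriv k₁ k₂ (ρ (i + 1) + ρ (i + 2)) := by
    cases i with
    | zero => exact (LJ1rDeriv_pos hk₁ hk₂ ((delta1_lt_zStar hk₁ hk₂).trans_le (hmem 1))).le
    | succ i =>
      exact (strictAntiOn_LJ1rDeriv hk₁ hk₂).antitoneOn (hmem (i + 2)) (hmem i)
        ((hρ.add_succ_lt hk₁ hk₂ (i + 1)).trans (hρ.add_succ_lt hk₁ hk₂ i)).le
  have hEL := hρ.eulerLagrange hk₁ hk₂ (i + 1)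
  simp only [leftBond] at hEL
  refine ((strictMonoOn_LJ1rDeriv hk₁ hk₂).le_iff_le (hρ.mem_Ioc_zStar hk₁ hk₂ _)
    (hρ.mem_Ioc_zStar hk₁ hk₂ _)).1 ?_
  linarith [hρ.eulerLagrange hk₁ hk₂ i]

end IsMinimizer

end BoundaryLayer

/-- every minimizer `r ∈ ℓ²(ℕ)` of `B_γ` (over sequences tending to `0`)
is a nonincreasing nonnegative sequence with `z_c² < γ + r_i ≤ δ₁` for all `i`.
(Here `r i` plays the role of `r_{i+1}` of the paper.) -/
theorem boundary_layer_monotone (k₁ k₂ : ℝ) (hk₁ : 0 < k₁) (hk₂ : 0 < k₂)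
    (r : ℕ → ℝ) (hr₂ : Memℓp r 2)
    (hmin : Bgam k₁ k₂ r = sInf {y : EReal | ∃ s : ℕ → ℝ,
      Filter.Tendsto s Filter.atTop (nhds 0) ∧ y = Bgam k₁ k₂ s}) :
    ∀ i : ℕ, r (i + 1) ≤ r i ∧ 0 ≤ r i ∧
      zc2 k₁ k₂ < gammaNNN k₁ k₂ + r i ∧ gammaNNN k₁ k₂ + r i ≤ delta1 k₁ k₂ := by
  intro i
  have hρ := BoundaryLayer.isMinimizer_gammaNNN_add hr₂ hmin
  refine ⟨by linarith [hρ.antitone hk₁ hk₂ i], by linarith [hρ.gammaNNN_le hk₁ hk₂ i], ?_,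
    hρ.le_delta1 hk₁ hk₂ i⟩
  rw [BoundaryLayer.zc2_eq]
  exact hρ.zStar_div_two_lt hk₁ hk₂ i
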